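/- arXiv:0710.1972 — 3 statements merged into one kernel-verified Lean document; each statement's English description precedes it below -/
import Mathlib

section
/- For every n ≥ 1, the assignment π · I_w = (−1)^{inv_w(π)} I_{πwπ⁻¹}, for π ∈ Sₙ and w an involution in Sₙ, defines a representation of Sₙ on Vₙ; that is, the map sending π ∈ Sₙ to the linear endomorphism of Vₙ determined on basis vectors by I_w ↦ (−1)^{inv_w(π)} I_{πwπ⁻¹} is a group homomorphism from Sₙ to GL(Vₙ). -/
open Equiv

/-- The set of involutions in `Sₙ` (elements `w` with `w² = id`). -/
abbrev SymInv (n : ℕ) : Type := {w : Equiv.Perm (Fin n) // w * w = 1}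

/-- `Vₙ`: the complex vector space with basis `{I_w : w an involution in Sₙ}`. -/
abbrev Vn (n : ℕ) : Type := SymInv n →₀ ℂ

/-- `inv_w(π) = |Inv(π) ∩ Pair(w)|`. -/
noncomputable def invw (n : ℕ) (w π : Equiv.Perm (Fin n)) : ℕ :=
  {p : Fin n × Fin n | p.1 < p.2 ∧ w p.1 = p.2 ∧ π p.2 < π p.1}.ncard

/-- Conjugation of an involution by a permutation: `π w π⁻¹`. -/
def conjInv (n : ℕ) (π : Equiv.Perm (Fin n)) (w : SymInv n) : SymInv n :=
  ⟨π * w.1 * π⁻¹, by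
    have h : π * w.1 * π⁻¹ * (π * w.1 * π⁻¹) = π * (w.1 * w.1) * π⁻¹ := by group
    rw [h, w.2, mul_one, mul_inv_cancel]⟩

/-- The linear endomorphism of `Vₙ` determined on basis vectors by
`I_w ↦ (−1)^{inv_w(π)} I_{π w π⁻¹}`. -/
noncomputable def rho (n : ℕ) (π : Equiv.Perm (Fin n)) : Vn n →ₗ[ℂ] Vn n :=
  Finsupp.lift (Vn n) ℂ (SymInv n)
    (fun w => ((-1 : ℂ) ^ invw n w.1 π) • Finsupp.single (conjInv n π w) (1 : ℂ))

/-!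
Group `Pair(w)` into the unordered 2-cycles `{i, w i}` of `w`. Then `(-1)^{inv_w(π)}` is the
product over these 2-cycles `z` of the sign `ε_π(z) = ±1` recording whether `π` reverses the order
of the two points of `z`. This sign is a cocycle, `ε_{πσ}(z) = ε_π(σ z) ε_σ(z)`, and the 2-cycles
of `σ w σ⁻¹` are the images under `σ` of those of `w`; hence
`(-1)^{inv_w(πσ)} = (-1)^{inv_{σwσ⁻¹}(π)} (-1)^{inv_w(σ)}`, which is `ρ(πσ) = ρ(π) ρ(σ)` on the
basis vector `I_w`.
-/

open Finset

namespace Equiv.Perm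

variable {α : Type*} [LinearOrder α]

def pairSign (π : Perm α) : Sym2 α → ℤˣ :=
  Sym2.lift ⟨fun i j => if (i < j ↔ π i < π j) then 1 else -1, fun i j => by
    rcases lt_trichotomy i j with h | rfl | h
    · simp [h, h.not_gt, (π.injective.ne h.ne).le_iff_lt]
    · rfl
    · simp [h, h.not_gt, (π.injective.ne h.ne).le_iff_lt]⟩

@[simp]
lemma pairSign_mk (π : Perm α) (i j : α) :
    pairSign π s(i, j) = if (i < j ↔ π i < π j) then 1 else -1 := rfl

lemma pairSign_mul (π σ : Perm α) (z : Sym2 α) :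
    pairSign (π * σ) z = pairSign π (z.map σ) * pairSign σ z := by
  induction z using Sym2.ind with
  | h i j =>
    simp only [pairSign_mk, Sym2.map_mk, mul_apply]
    by_cases a : i < j <;> by_cases b : σ i < σ j <;> by_cases c : π (σ i) < π (σ j) <;>
      simp [a, b, c]

lemma pairSign_mk_of_lt (π : Perm α) {i j : α} (h : i < j) :
    pairSign π s(i, j) = if π j < π i then -1 else 1 := by
  have hπ : π i < π j ↔ ¬π j < π i :=
    ⟨lt_asymm, fun h' => (not_lt.1 h').lt_of_ne (π.injective.ne h.ne)⟩
  simp only [pairSign_mk, h, true_iff, hπ, ite_not]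

variable [Fintype α]

/-- For an involution `w`, the unordered version of `Pair(w)`. -/
def pairs (w : Perm α) : Finset (Sym2 α) :=
  (univ.filter fun i => w i ≠ i).image fun i => s(i, w i)

lemma mem_pairs {w : Perm α} {z : Sym2 α} : z ∈ pairs w ↔ ∃ i, w i ≠ i ∧ s(i, w i) = z := by
  simp [pairs]

lemma pairs_conj (σ w : Perm α) : pairs (σ * w * σ⁻¹) = (pairs w).image (Sym2.map σ) := by
  ext z
  simp only [mem_image, mem_pairs]
  constructor
  · rintro ⟨j, hj, rfl⟩
    refine ⟨s(σ⁻¹ j, w (σ⁻¹ j)), ⟨σ⁻¹ j, fun h => hj ?_, rfl⟩, by simp⟩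
    rw [mul_apply, mul_apply, h]; exact σ.apply_symm_apply j
  · rintro ⟨_, ⟨i, hi, rfl⟩, rfl⟩
    exact ⟨σ i, by simpa using hi, by simp⟩

lemma prod_pairSign_mul (π σ w : Perm α) :
    ∏ z ∈ pairs w, pairSign (π * σ) z =
      (∏ z ∈ pairs (σ * w * σ⁻¹), pairSign π z) * ∏ z ∈ pairs w, pairSign σ z := by
  rw [pairs_conj, prod_image (Sym2.map.injective σ.injective).injOn, ← prod_mul_distrib]
  exact prod_congr rfl fun z _ => pairSign_mul π σ z

lemma pairs_eq_image_of_mul_self_eq_one {w : Perm α} (hw : w * w = 1) :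
    pairs w = (univ.filter fun p : α × α => p.1 < p.2 ∧ w p.1 = p.2).image
      fun p => s(p.1, p.2) := by
  have hww : ∀ i, w (w i) = i := fun i => congr($hw i)
  ext z
  simp only [mem_pairs, mem_image, mem_filter, mem_univ, true_and, Prod.exists]
  constructor
  · rintro ⟨i, hi, rfl⟩
    rcases hi.lt_or_gt with h | h
    · exact ⟨w i, i, ⟨h, hww i⟩, Sym2.eq_swap⟩
    · exact ⟨i, w i, ⟨h, rfl⟩, rfl⟩
  · rintro ⟨i, j, ⟨hij, rfl⟩, rfl⟩
    exact ⟨i, hij.ne', rfl⟩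

end Equiv.Perm

lemma invw_eq_card (n : ℕ) (w π : Perm (Fin n)) :
    invw n w π = #((univ.filter fun p : Fin n × Fin n => p.1 < p.2 ∧ w p.1 = p.2).filter
      fun p => π p.2 < π p.1) := by
  rw [invw, ← Set.ncard_coe_finset]
  congr 1
  ext p
  simp [and_assoc]

lemma neg_one_pow_invw {n : ℕ} {w : Perm (Fin n)} (hw : w * w = 1) (π : Perm (Fin n)) :
    (-1 : ℤˣ) ^ invw n w π = ∏ z ∈ w.pairs, π.pairSign z := by
  rw [Perm.pairs_eq_image_of_mul_self_eq_one hw, prod_image, invw_eq_card, ← prod_const,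
    prod_filter]
  · exact prod_congr rfl fun p hp => (Perm.pairSign_mk_of_lt π (mem_filter.1 hp).2.1).symm
  · rintro ⟨a, b⟩ hab ⟨c, d⟩ hcd h
    simp only [coe_filter, mem_univ, true_and, Set.mem_ofPred_eq] at hab hcd
    rcases Sym2.eq_iff.1 h with ⟨rfl, rfl⟩ | ⟨rfl, rfl⟩
    · rfl
    · exact absurd (hab.1.trans hcd.1) (lt_irrefl a)

lemma neg_one_pow_invw_mul {n : ℕ} (w : SymInv n) (π σ : Perm (Fin n)) :
    (-1 : ℂ) ^ invw n w.1 (π * σ) =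
      (-1) ^ invw n (conjInv n σ w).1 π * (-1) ^ invw n w.1 σ := by
  have h : (-1 : ℤˣ) ^ invw n w.1 (π * σ) =
      (-1) ^ invw n (conjInv n σ w).1 π * (-1) ^ invw n w.1 σ := by
    rw [neg_one_pow_invw w.2, neg_one_pow_invw (conjInv n σ w).2, neg_one_pow_invw w.2]
    exact Perm.prod_pairSign_mul π σ w.1
  simpa using congr(((($h : ℤˣ) : ℤ) : ℂ))

lemma invw_one (n : ℕ) (w : Perm (Fin n)) : invw n w 1 = 0 := by
  rw [invw, Set.ncard_eq_zero]
  ext p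
  simpa using fun h _ => h.le

lemma conjInv_one {n : ℕ} (w : SymInv n) : conjInv n 1 w = w :=
  Subtype.ext (by simp [conjInv])

lemma conjInv_mul {n : ℕ} (π σ : Perm (Fin n)) (w : SymInv n) :
    conjInv n (π * σ) w = conjInv n π (conjInv n σ w) :=
  Subtype.ext (by simp only [conjInv]; group)

lemma rho_single {n : ℕ} (π : Perm (Fin n)) (w : SymInv n) :
    rho n π (Finsupp.single w 1) =
      (-1 : ℂ) ^ invw n w.1 π • Finsupp.single (conjInv n π w) 1 := by
  rw [rho, Finsupp.lift_apply, Finsupp.sum_single_index (by simp), one_smul]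

theorem rho_isGroupHom_general (n : ℕ) :
    rho n 1 = LinearMap.id ∧
      ∀ π σ : Equiv.Perm (Fin n), rho n (π * σ) = (rho n π) ∘ₗ (rho n σ) := by
  refine ⟨Finsupp.lhom_ext' fun w => LinearMap.ext_ring ?_,
    fun π σ => Finsupp.lhom_ext' fun w => LinearMap.ext_ring ?_⟩
  · simp [rho_single, invw_one, conjInv_one]
  · simp only [LinearMap.comp_apply, Finsupp.lsingle_apply, rho_single, map_smul, smul_smul,
      conjInv_mul, neg_one_pow_invw_mul, mul_comm]

/-- The map `π ↦ ρ(π)` is a group homomorphism from `Sₙ` to `GL(Vₙ)`: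
it is unital and multiplicative (and hence lands in invertible endomorphisms). -/
theorem rho_isGroupHom (n : ℕ) (hn : 1 ≤ n) :
    rho n 1 = LinearMap.id ∧
      ∀ π σ : Equiv.Perm (Fin n), rho n (π * σ) = (rho n π) ∘ₗ (rho n σ) :=
  rho_isGroupHom_general n
end

section
/- For every n ≥ 2, every q ∈ ℂ with q ≠ 0, and all indices 1 ≤ i < j − 1 < n − 1 (i.e. |i − j| > 1), the operators T_i and T_j on V_{n,q} commute: T_i T_j = T_j T_i in End_ℂ(V_{n,q}). -/
open Equiv

/-- The operator `T_i` on `V_{n,q}`.  Here indices are 0-based: the parameter `i`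
(with `i + 1 < n`) corresponds to the pair of points `i, i+1` of `{0, …, n−1}`
(that is, to the 1-based index `i+1` of the paper), and `s_i` is the transposition
swapping them.  On a basis vector `I_w` it acts by:
`q I_w` if `i, i+1 ∉ supp(w)`; `−I_w` if `i, i+1 ∈ supp(w)`;
`I_{s_i w s_i}` if `i ∈ supp(w)`, `i+1 ∉ supp(w)`;
`q I_{s_i w s_i} + (q−1) I_w` if `i ∉ supp(w)`, `i+1 ∈ supp(w)`. -/
noncomputable def TOp (n : ℕ) (q : ℂ) (i : ℕ) (hi : i + 1 < n) : Vn n →ₗ[ℂ] Vn n :=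
  Finsupp.lift (Vn n) ℂ (SymInv n) (fun w =>
    letI a : Fin n := ⟨i, Nat.lt_of_succ_lt hi⟩
    letI b : Fin n := ⟨i + 1, hi⟩
    letI s : Equiv.Perm (Fin n) := Equiv.swap a b
    if w.1 a = a then
      (if w.1 b = b then q • Finsupp.single w (1 : ℂ)
       else q • Finsupp.single (conjInv n s w) (1 : ℂ) + (q - 1) • Finsupp.single w (1 : ℂ))
    else
      (if w.1 b = b then Finsupp.single (conjInv n s w) (1 : ℂ)
       else - Finsupp.single w (1 : ℂ)))

lemma TOp_single (n : ℕ) (q : ℂ) (i : ℕ) (hi : i + 1 < n) (w : SymInv n) :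
    TOp n q i hi (Finsupp.single w 1) =
    (letI a : Fin n := ⟨i, Nat.lt_of_succ_lt hi⟩
     letI b : Fin n := ⟨i + 1, hi⟩
     letI s : Equiv.Perm (Fin n) := Equiv.swap a b
     if w.1 a = a then
      (if w.1 b = b then q • Finsupp.single w (1 : ℂ)
       else q • Finsupp.single (conjInv n s w) (1 : ℂ) + (q - 1) • Finsupp.single w (1 : ℂ))
     else
      (if w.1 b = b then Finsupp.single (conjInv n s w) (1 : ℂ)
       else - Finsupp.single w (1 : ℂ))) := by
  rw [TOp, Finsupp.lift_apply, Finsupp.sum_single_index (by simp), one_smul]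

lemma conjInv_conjInv (n : ℕ) (π σ : Equiv.Perm (Fin n)) (w : SymInv n) :
    conjInv n π (conjInv n σ w) = conjInv n (π * σ) w := by
  apply Subtype.ext
  simp [conjInv, mul_assoc]

lemma conjInv_fix (n : ℕ) (π : Equiv.Perm (Fin n)) (w : SymInv n) (x : Fin n)
    (hx : π x = x) : ((conjInv n π w).1 x = x) ↔ (w.1 x = x) := by
  have h1 : π⁻¹ x = x := by apply π.injective; simp [hx]
  constructor
  · intro h
    have h2 : π (w.1 x) = π x := by
      have h3 : π (w.1 (π⁻¹ x)) = x := h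
      rw [h1] at h3
      rw [h3, hx]
    exact π.injective h2
  · intro h
    show π (w.1 (π⁻¹ x)) = x
    simp [h1, h, hx]

/-- Distant operators `T_i` and `T_j` commute.  In the 0-based indexing used here, the
condition `1 ≤ i < j − 1 < n − 1` of the paper reads `i + 1 < j` and `j + 1 < n`. -/
theorem TOp_comm (n : ℕ) (hn : 2 ≤ n) (q : ℂ) (hq : q ≠ 0) (i j : ℕ)
    (hi : i + 1 < n) (hj : j + 1 < n) (hij : i + 1 < j) :
    (TOp n q i hi : Module.End ℂ (Vn n)) * TOp n q j hj =
      (TOp n q j hj : Module.End ℂ (Vn n)) * TOp n q i hi := by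
  set a : Fin n := ⟨i, Nat.lt_of_succ_lt hi⟩ with ha
  set b : Fin n := ⟨i + 1, hi⟩ with hb
  set c : Fin n := ⟨j, Nat.lt_of_succ_lt hj⟩ with hc
  set d : Fin n := ⟨j + 1, hj⟩ with hd
  have hab : (a : Fin n) ≠ b := by simp [ha, hb, Fin.ext_iff]
  have hac : a ≠ c := by simp [ha, hc, Fin.ext_iff]; omega
  have had : a ≠ d := by simp [ha, hd, Fin.ext_iff]; omega
  have hbc : b ≠ c := by simp [hb, hc, Fin.ext_iff]; omega
  have hbd : b ≠ d := by simp [hb, hd, Fin.ext_iff]; omega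
  set s : Equiv.Perm (Fin n) := Equiv.swap a b with hs
  set t : Equiv.Perm (Fin n) := Equiv.swap c d with ht
  have hsc : s c = c := Equiv.swap_apply_of_ne_of_ne hac.symm hbc.symm
  have hsd : s d = d := Equiv.swap_apply_of_ne_of_ne had.symm hbd.symm
  have hta : t a = a := Equiv.swap_apply_of_ne_of_ne hac had
  have htb : t b = b := Equiv.swap_apply_of_ne_of_ne hbc hbd
  have hdisj : Equiv.Perm.Disjoint s t := by
    intro x
    rcases eq_or_ne x a with rfl | hxa
    · exact Or.inr hta
    rcases eq_or_ne x b with rfl | hxb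
    · exact Or.inr htb
    · exact Or.inl (Equiv.swap_apply_of_ne_of_ne hxa hxb)
  have hst : s * t = t * s := hdisj.commute.eq
  apply Finsupp.lhom_ext'
  intro w
  apply LinearMap.ext_ring
  simp only [LinearMap.comp_apply, Module.End.mul_apply, Finsupp.lsingle_apply]
  have key : conjInv n s (conjInv n t w) = conjInv n t (conjInv n s w) := by
    rw [conjInv_conjInv, conjInv_conjInv, hst]
  rw [TOp_single, TOp_single]
  simp only [← ha, ← hb, ← hc, ← hd, ← hs, ← ht]
  split_ifs <;>
    simp_all only [map_add, map_smul, map_neg, TOp_single, ← ha, ← hb, ← hc, ← hd, ← hs, ← ht,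
      conjInv_fix n t w a hta, conjInv_fix n t w b htb,
      conjInv_fix n s w c hsc, conjInv_fix n s w d hsd, key,
      if_true, if_false, ite_true, ite_false, not_false_iff] <;>
    module
end

section
/- For every n ≥ 2, every q ∈ ℂ with q ≠ 0, and every 1 ≤ i ≤ n − 1, the operator T_i on V (the span of basis vectors indexed by involutions in ISₙ) satisfies (T_i − q·id)(T_i + id) = 0 in End_ℂ(V). -/
open Equiv

/-- The symmetric inverse semigroup `ISₙ`: partial injective maps of `{0, …, n−1}`
(modelled as partial equivalences `Fin n ≃. Fin n`), under composition of partial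
maps: `(x * y)(a) = x(y(a))`. -/
abbrev ISn (n : ℕ) : Type := PEquiv (Fin n) (Fin n)

noncomputable instance ISnMonoid (n : ℕ) : Monoid (ISn n) where
  one := PEquiv.refl (Fin n)
  mul x y := y.trans x
  mul_assoc x y z := (PEquiv.trans_assoc z y x).symm
  one_mul x := PEquiv.trans_refl x
  mul_one x := PEquiv.refl_trans x

@[simp] theorem ISn.mul_def {n : ℕ} (x y : ISn n) : x * y = y.trans x := rfl
@[simp] theorem ISn.one_def {n : ℕ} : (1 : ISn n) = PEquiv.refl (Fin n) := rfl

/-- Involutions in `ISₙ`: elements mapping their domain bijectively to itself with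
`w(w(a)) = a` for all `a` in the domain; equivalently, `w.symm = w`. -/
abbrev ISInv (n : ℕ) : Type := {w : ISn n // w.symm = w}

/-- `V`: the complex vector space with basis `{I_w : w an involution in ISₙ}`. -/
abbrev VIS (n : ℕ) : Type := ISInv n →₀ ℂ

/-- Conjugation `x w x⁻¹` of an involution `w ∈ ISₙ` by an element `x ∈ ISₙ`
(as a partial map, `a ↦ x(w(x⁻¹(a)))`; when `dom(w) ⊆ dom(x)` this is the involution
with domain `x(dom(w))` sending `x(a) ↦ x(w(a))` for `a ∈ dom(w)`). -/
def conjIS {n : ℕ} (x : ISn n) (w : ISInv n) : ISInv n :=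
  ⟨(x.symm.trans w.1).trans x, by
    rw [PEquiv.symm_trans_rev, PEquiv.symm_trans_rev, PEquiv.symm_symm, w.2,
      PEquiv.trans_assoc]⟩

/-- Conjugation `π w π⁻¹` of an involution `w ∈ ISₙ` by a permutation `π ∈ Sₙ`:
the involution with domain `π(dom(w))` sending `π(a) ↦ π(w(a))` for `a ∈ dom(w)`. -/
def conjPermIS {n : ℕ} (π : Equiv.Perm (Fin n)) (w : ISInv n) : ISInv n :=
  conjIS π.toPEquiv w

/-- The operator `T_i` on `V`.  Indices are 0-based: the parameter `i` (with
`i + 1 < n`) corresponds to the pair of points `i, i+1` of `{0, …, n−1}` (that is,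
to the 1-based index `i+1` of the paper), and `s_i` is the transposition swapping
them.  On a basis vector `I_w`:
if `i, i+1 ∈ dom(w)` then `T_i I_w` is `q I_w` if `i, i+1 ∉ supp(w)`; `−I_w` if
`i, i+1 ∈ supp(w)`; `I_{s_i w s_i}` if `i ∈ supp(w)`, `i+1 ∉ supp(w)`;
`q I_{s_i w s_i} + (q−1) I_w` if `i ∉ supp(w)`, `i+1 ∈ supp(w)`.
If `i, i+1 ∉ dom(w)` then `T_i I_w = q I_w`.  If `i ∈ dom(w)`, `i+1 ∉ dom(w)` then
`T_i I_w = I_{s_i w s_i}`.  If `i ∉ dom(w)`, `i+1 ∈ dom(w)` then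
`T_i I_w = q I_{s_i w s_i} + (q−1) I_w`. -/
noncomputable def TIS (n : ℕ) (q : ℂ) (i : ℕ) (hi : i + 1 < n) : VIS n →ₗ[ℂ] VIS n :=
  Finsupp.lift (VIS n) ℂ (ISInv n) (fun w =>
    letI a : Fin n := ⟨i, Nat.lt_of_succ_lt hi⟩
    letI b : Fin n := ⟨i + 1, hi⟩
    letI s : Equiv.Perm (Fin n) := Equiv.swap a b
    if (w.1 a).isSome then
      if (w.1 b).isSome then
        -- both `i` and `i+1` lie in `dom(w)`
        if w.1 a = some a then
          if w.1 b = some b then q • Finsupp.single w (1 : ℂ)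
          else q • Finsupp.single (conjPermIS s w) (1 : ℂ) +
            (q - 1) • Finsupp.single w (1 : ℂ)
        else
          if w.1 b = some b then Finsupp.single (conjPermIS s w) (1 : ℂ)
          else - Finsupp.single w (1 : ℂ)
      else Finsupp.single (conjPermIS s w) (1 : ℂ)
    else
      if (w.1 b).isSome then
        q • Finsupp.single (conjPermIS s w) (1 : ℂ) + (q - 1) • Finsupp.single w (1 : ℂ)
      else q • Finsupp.single w (1 : ℂ))

/-- The operator `P_i` on `V`.  Indices are 0-based: the parameter `i` (with `i < n`)
corresponds to the 1-based index `i+1` of the paper, so that the paper's condition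
`dom(w) ⊆ {i+1, …, n}` becomes: every `a ∈ dom(w)` satisfies `i < a`.
On a basis vector: `P_i I_w = I_w` if `dom(w) ⊆ {i+1, …, n}`, and `P_i I_w = 0`
otherwise. -/
noncomputable def PIS (n : ℕ) (i : ℕ) : VIS n →ₗ[ℂ] VIS n :=
  Finsupp.lift (VIS n) ℂ (ISInv n) (fun w =>
    if ∀ a : Fin n, (w.1 a).isSome → i < (a : ℕ) then Finsupp.single w (1 : ℂ) else 0)

/-- The linear map `C_π : V → V` with `C_π(I_w) = I_{π w π⁻¹}`. -/
noncomputable def CIS (n : ℕ) (π : Equiv.Perm (Fin n)) : VIS n →ₗ[ℂ] VIS n :=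
  Finsupp.lift (VIS n) ℂ (ISInv n) (fun w => Finsupp.single (conjPermIS π w) (1 : ℂ))

/-! ### Auxiliary lemmas for the quadratic relation -/

/-- The function on involutions underlying `TIS`. -/
noncomputable def fTIS (n : ℕ) (q : ℂ) (i : ℕ) (hi : i + 1 < n) (w : ISInv n) : VIS n :=
  letI a : Fin n := ⟨i, Nat.lt_of_succ_lt hi⟩
  letI b : Fin n := ⟨i + 1, hi⟩
  letI s : Equiv.Perm (Fin n) := Equiv.swap a b
  if (w.1 a).isSome then
    if (w.1 b).isSome then
      if w.1 a = some a then
        if w.1 b = some b then q • Finsupp.single w (1 : ℂ)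
        else q • Finsupp.single (conjPermIS s w) (1 : ℂ) +
          (q - 1) • Finsupp.single w (1 : ℂ)
      else
        if w.1 b = some b then Finsupp.single (conjPermIS s w) (1 : ℂ)
        else - Finsupp.single w (1 : ℂ)
    else Finsupp.single (conjPermIS s w) (1 : ℂ)
  else
    if (w.1 b).isSome then
      q • Finsupp.single (conjPermIS s w) (1 : ℂ) + (q - 1) • Finsupp.single w (1 : ℂ)
    else q • Finsupp.single w (1 : ℂ)

lemma TIS_eq_lift (n : ℕ) (q : ℂ) (i : ℕ) (hi : i + 1 < n) :
    TIS n q i hi = Finsupp.lift (VIS n) ℂ (ISInv n) (fTIS n q i hi) := rfl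

lemma TIS_single (n : ℕ) (q : ℂ) (i : ℕ) (hi : i + 1 < n) (w : ISInv n) :
    TIS n q i hi (Finsupp.single w 1) = fTIS n q i hi w := by
  rw [TIS_eq_lift, Finsupp.lift_apply]
  simp

lemma conjPermIS_apply {n : ℕ} (π : Equiv.Perm (Fin n)) (w : ISInv n) (x : Fin n) :
    (conjPermIS π w).1 x = (w.1 (π.symm x)).map π := by
  show ((π.toPEquiv.symm.trans w.1).trans π.toPEquiv) x = _
  rw [← Equiv.toPEquiv_symm]
  show ((π.symm.toPEquiv x).bind w.1).bind π.toPEquiv = _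
  rw [Equiv.toPEquiv_apply, Option.bind_some]
  cases w.1 (π.symm x) <;> simp [Equiv.toPEquiv_apply]

lemma conj_swap_swap {n : ℕ} (a b : Fin n) (w : ISInv n) :
    conjPermIS (Equiv.swap a b) (conjPermIS (Equiv.swap a b) w) = w := by
  apply Subtype.ext; apply PEquiv.ext; intro x
  rw [conjPermIS_apply, conjPermIS_apply]
  cases h : w.1 (((Equiv.swap a b).symm) (((Equiv.swap a b).symm) x)) <;>
    simp_all [Equiv.symm_swap, Equiv.swap_apply_self]

lemma ISInv_symm {n : ℕ} (w : ISInv n) {x y : Fin n} (h : w.1 x = some y) :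
    w.1 y = some x := by
  have := (PEquiv.eq_some_iff w.1).2 h
  rwa [w.2] at this

/-- The key computation: `T_i² I_w = (q-1) T_i I_w + q I_w` on basis vectors. -/
lemma TIS_sq_single (n : ℕ) (q : ℂ) (i : ℕ) (hi : i + 1 < n) (w : ISInv n) :
    TIS n q i hi (TIS n q i hi (Finsupp.single w 1)) =
      (q - 1) • TIS n q i hi (Finsupp.single w 1) + q • Finsupp.single w 1 := by
  set a : Fin n := ⟨i, Nat.lt_of_succ_lt hi⟩ with ha_def
  set b : Fin n := ⟨i + 1, hi⟩ with hb_def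
  have hab : a ≠ b := by simp [ha_def, hb_def, Fin.ext_iff]
  set s : Equiv.Perm (Fin n) := Equiv.swap a b with hs_def
  have hsa : s a = b := Equiv.swap_apply_left a b
  have hsb : s b = a := Equiv.swap_apply_right a b
  have hss : s.symm = s := Equiv.symm_swap a b
  set w' : ISInv n := conjPermIS s w with hw'_def
  have hconj : conjPermIS s w' = w := conj_swap_swap a b w
  have hw'a : w'.1 a = (w.1 b).map s := by rw [hw'_def, conjPermIS_apply, hss, hsa]
  have hw'b : w'.1 b = (w.1 a).map s := by rw [hw'_def, conjPermIS_apply, hss, hsb]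
  rw [TIS_single]
  rcases hva : w.1 a with _ | x <;> rcases hvb : w.1 b with _ | y
  · -- both not in dom: eigenvalue q
    have h1 : fTIS n q i hi w = q • Finsupp.single w 1 := by
      simp [fTIS, ← ha_def, ← hb_def, hva, hvb]
    rw [h1, map_smul, TIS_single, h1]
    module
  · -- a ∉ dom, b ∈ dom
    have h1 : fTIS n q i hi w =
        q • Finsupp.single w' 1 + (q - 1) • Finsupp.single w 1 := by
      simp [fTIS, ← ha_def, ← hb_def, hva, hvb, ← hs_def, ← hw'_def]
    have h2 : fTIS n q i hi w' = Finsupp.single w 1 := by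
      have e1 : w'.1 a = some (s y) := by rw [hw'a, hvb]; rfl
      have e2 : w'.1 b = none := by rw [hw'b, hva]; rfl
      simp [fTIS, ← ha_def, ← hb_def, e1, e2, ← hs_def, hconj]
    rw [h1, map_add, map_smul, map_smul, TIS_single, TIS_single, h1, h2]
    module
  · -- a ∈ dom, b ∉ dom
    have h1 : fTIS n q i hi w = Finsupp.single w' 1 := by
      simp [fTIS, ← ha_def, ← hb_def, hva, hvb, ← hs_def, ← hw'_def]
    have h2 : fTIS n q i hi w' =
        q • Finsupp.single w 1 + (q - 1) • Finsupp.single w' 1 := by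
      have e1 : w'.1 a = none := by rw [hw'a, hvb]; rfl
      have e2 : w'.1 b = some (s x) := by rw [hw'b, hva]; rfl
      simp [fTIS, ← ha_def, ← hb_def, e1, e2, ← hs_def, hconj]
    rw [h1, TIS_single, h2]
    module
  · -- both in dom
    by_cases hxa : x = a
    · subst hxa
      by_cases hyb : y = b
      · -- both fixed: eigenvalue q
        subst hyb
        have h1 : fTIS n q i hi w = q • Finsupp.single w 1 := by
          simp [fTIS, ← ha_def, ← hb_def, hva, hvb]
        rw [h1, map_smul, TIS_single, h1]
        module
      · -- a fixed, b in supp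
        have hya : y ≠ a := by
          intro h; subst h
          exact hab (Option.some_injective _ (hva.symm.trans (ISInv_symm w hvb)))
        have hsy : s y = y := Equiv.swap_apply_of_ne_of_ne hya hyb
        have h1 : fTIS n q i hi w =
            q • Finsupp.single w' 1 + (q - 1) • Finsupp.single w 1 := by
          simp [fTIS, ← ha_def, ← hb_def, hva, hvb, hyb, ← hs_def, ← hw'_def]
        have h2 : fTIS n q i hi w' = Finsupp.single w 1 := by
          have e1 : w'.1 a = some y := by rw [hw'a, hvb, Option.map_some, hsy]
          have e2 : w'.1 b = some b := by rw [hw'b, hva, Option.map_some, hsa]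
          simp [fTIS, ← ha_def, ← hb_def, e1, e2, hya, ← hs_def, hconj]
        rw [h1, map_add, map_smul, map_smul, TIS_single, TIS_single, h1, h2]
        module
    · by_cases hyb : y = b
      · -- b fixed, a in supp
        subst hyb
        have hxb : x ≠ b := by
          intro h; subst h
          exact hab (Option.some_injective _ ((ISInv_symm w hva).symm.trans hvb))
        have hsx : s x = x := Equiv.swap_apply_of_ne_of_ne hxa hxb
        have h1 : fTIS n q i hi w = Finsupp.single w' 1 := by
          simp [fTIS, ← ha_def, ← hb_def, hva, hvb, hxa, ← hs_def, ← hw'_def]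
        have h2 : fTIS n q i hi w' =
            q • Finsupp.single w 1 + (q - 1) • Finsupp.single w' 1 := by
          have e1 : w'.1 a = some a := by rw [hw'a, hvb, Option.map_some, hsb]
          have e2 : w'.1 b = some x := by rw [hw'b, hva, Option.map_some, hsx]
          simp [fTIS, ← ha_def, ← hb_def, e1, e2, hxb, ← hs_def, hconj]
        rw [h1, TIS_single, h2]
        module
      · -- both in supp: eigenvalue -1
        have h1 : fTIS n q i hi w = - Finsupp.single w 1 := by
          simp [fTIS, ← ha_def, ← hb_def, hva, hvb, hxa, hyb]
        rw [h1, map_neg, TIS_single, h1]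
        module

/-- The operator `T_i` on `V` satisfies the quadratic relation
`(T_i − q·id)(T_i + id) = 0`. -/
theorem TIS_quadratic (n : ℕ) (hn : 2 ≤ n) (q : ℂ) (hq : q ≠ 0) (i : ℕ) (hi : i + 1 < n) :
    (TIS n q i hi - q • (1 : Module.End ℂ (VIS n))) * (TIS n q i hi + 1) = 0 := by
  apply Finsupp.lhom_ext
  intro w c
  have hc : (Finsupp.single w c : VIS n) = c • Finsupp.single w (1 : ℂ) := by
    rw [Finsupp.smul_single, smul_eq_mul, mul_one]
  have hk := TIS_sq_single n q i hi w
  rw [hc]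
  simp only [LinearMap.zero_apply, Module.End.mul_apply, map_smul, LinearMap.sub_apply,
    LinearMap.add_apply, LinearMap.smul_apply, Module.End.one_apply, map_add, hk]
  congr 1
  module
end
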